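/- arXiv:1202.4044 — 6 statements merged into one kernel-verified Lean document; each statement's English description precedes it below -/
import Mathlib

section
/- For each integer d with 0 ≤ d ≤ D, the set {P ∈ R^{D×D} : P symmetric, 0 ≼ P ≼ I, tr P = d} is the convex hull of the set of D×D orthogonal projection matrices with trace d. -/
/-!
Diagonalise `P = U diag(λ) Uᵀ`. The constraints `0 ≼ P ≼ I`, `tr P = d` say exactly that `λ` lies in
the hypersimplex `{x ∈ [0,1]^D | ∑ x = d}`. By Krein–Milman the hypersimplex is the convex hull of
its extreme points, and these are 0/1 vectors: since `d` is an integer, one fractional coordinate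
forces a second one, and shifting mass between the two moves both ways inside the hypersimplex.
The linear map `y ↦ U diag(y) Uᵀ` sends a 0/1 vector with sum `d` to an orthoprojector of trace
`d`. Conversely, orthoprojectors satisfy `0 ≼ Π ≼ I`, and the constraint set is convex.
-/

open Matrix Set
open scoped MatrixOrder

lemma eq_zero_of_mem_extremePoints_of_add_mem_of_sub_mem {𝕜 E : Type*} [Field 𝕜] [LinearOrder 𝕜]
    [IsStrictOrderedRing 𝕜] [AddCommGroup E] [Module 𝕜 E] {A : Set E} {x v : E}
    (hx : x ∈ A.extremePoints 𝕜) (hadd : x + v ∈ A) (hsub : x - v ∈ A) : v = 0 := by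
  have hseg : x ∈ openSegment 𝕜 (x + v) (x - v) :=
    ⟨1 / 2, 1 / 2, by norm_num, by norm_num, by norm_num, by
      rw [← smul_add, add_add_sub_cancel, ← two_smul 𝕜 x, smul_smul]; norm_num⟩
  simpa using hx.2 hadd hsub hseg

def hypersimplex (ι : Type*) [Fintype ι] (d : ℕ) : Set (ι → ℝ) :=
  Icc 0 1 ∩ {x | ∑ i, x i = d}

section Hypersimplex

variable {ι : Type*} [Fintype ι]

lemma convex_hypersimplex (d : ℕ) : Convex ℝ (hypersimplex ι d) :=
  (convex_Icc 0 1).inter <| convex_hyperplane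
    ⟨fun _ _ ↦ Finset.sum_add_distrib, fun _ _ ↦ (Finset.mul_sum _ _ _).symm⟩ _

lemma isCompact_hypersimplex (d : ℕ) : IsCompact (hypersimplex ι d) :=
  isCompact_Icc.inter_right <| isClosed_eq (by fun_prop) continuous_const

lemma add_mem_hypersimplex {d : ℕ} {x v : ι → ℝ} (hx : x ∈ hypersimplex ι d)
    (hv : ∑ i, v i = 0) (hv₀ : ∀ i, |v i| ≤ x i) (hv₁ : ∀ i, |v i| ≤ 1 - x i) :
    x + v ∈ hypersimplex ι d := by
  refine ⟨⟨fun i ↦ ?_, fun i ↦ ?_⟩, ?_⟩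
  · simpa using by linarith [neg_abs_le (v i), hv₀ i]
  · simpa using by linarith [le_abs_self (v i), hv₁ i]
  · simpa [Finset.sum_add_distrib, hv] using hx.2

lemma exists_ne_mem_Ioo_of_mem_hypersimplex {d : ℕ} {x : ι → ℝ} (hx : x ∈ hypersimplex ι d)
    {i : ι} (hi : x i ∈ Ioo 0 1) : ∃ j ≠ i, x j ∈ Ioo 0 1 := by
  classical
  by_contra! h
  have hint : ∀ j ≠ i, x j ∈ (⊥ : Subring ℝ) := fun j hj ↦ by
    rcases (hx.1.1 j).eq_or_lt with h0 | h0
    · exact h0 ▸ zero_mem _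
    · exact (not_lt.1 fun h1 ↦ h j hj ⟨h0, h1⟩).antisymm (hx.1.2 j) ▸ one_mem _
  have hxi : x i = d - ∑ j ∈ Finset.univ.erase i, x j := by
    rw [← hx.2, ← Finset.add_sum_erase _ _ (Finset.mem_univ i)]; ring
  obtain ⟨m, hm⟩ := Subring.mem_bot.1 <| hxi ▸
    sub_mem (natCast_mem _ d) (sum_mem fun j hj ↦ hint j (Finset.ne_of_mem_erase hj))
  obtain ⟨h0, h1⟩ := hm ▸ hi
  norm_cast at h0 h1
  omega

lemma extremePoints_hypersimplex_subset (d : ℕ) :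
    (hypersimplex ι d).extremePoints ℝ ⊆ univ.pi fun _ ↦ {0, 1} := by
  classical
  intro x hx
  rw [mem_univ_pi]
  intro i
  by_contra hi
  have hi' : x i ∈ Ioo 0 1 :=
    ⟨(hx.1.1.1 i).lt_of_ne fun h ↦ hi (.inl h.symm), (hx.1.1.2 i).lt_of_ne fun h ↦ hi (.inr h)⟩
  obtain ⟨j, hji, hj⟩ := exists_ne_mem_Ioo_of_mem_hypersimplex hx.1 hi'
  set ε := min (min (x i) (1 - x i)) (min (x j) (1 - x j))
  have hε : 0 < ε := by simp only [ε, lt_min_iff, sub_pos]; exact ⟨⟨hi'.1, hi'.2⟩, hj.1, hj.2⟩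
  set v : ι → ℝ := Pi.single i ε - Pi.single j ε
  have hv : ∑ k, v k = 0 := by simp [v, Finset.sum_sub_distrib]
  have hvx : ∀ k, |v k| ≤ x k ∧ |v k| ≤ 1 - x k := fun k ↦ by
    have hk : 0 ≤ x k ∧ x k ≤ 1 := ⟨hx.1.1.1 k, hx.1.1.2 k⟩
    have hεi : ε ≤ x i ∧ ε ≤ 1 - x i := by simp [ε]
    have hεj : ε ≤ x j ∧ ε ≤ 1 - x j := by simp [ε]
    rcases eq_or_ne k i with rfl | hki
    · simpa [v, hji.symm, abs_of_pos hε] using hεi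
    rcases eq_or_ne k j with rfl | hkj
    · simpa [v, hki, abs_of_pos hε] using hεj
    · simpa [v, hki, hkj, sub_nonneg] using hk
  have hv0 := eq_zero_of_mem_extremePoints_of_add_mem_of_sub_mem hx
    (add_mem_hypersimplex hx.1 hv (fun k ↦ (hvx k).1) fun k ↦ (hvx k).2)
    (sub_eq_add_neg x v ▸ add_mem_hypersimplex hx.1 (by simp [hv])
      (fun k ↦ by simpa using (hvx k).1) fun k ↦ by simpa using (hvx k).2)
  have hvi := congrFun hv0 i
  simp only [v, Pi.sub_apply, Pi.single_eq_same, Pi.single_eq_of_ne hji.symm, sub_zero,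
    Pi.zero_apply] at hvi
  exact hε.ne' hvi

theorem hypersimplex_eq_convexHull (d : ℕ) :
    hypersimplex ι d = convexHull ℝ (hypersimplex ι d ∩ univ.pi fun _ ↦ {0, 1}) := by
  refine subset_antisymm ?_ (convexHull_min inter_subset_left (convex_hypersimplex d))
  have hfin : (hypersimplex ι d ∩ univ.pi fun _ ↦ {0, 1}).Finite :=
    (Set.Finite.pi fun _ ↦ toFinite _).subset inter_subset_right
  calc hypersimplex ι d
      = closure (convexHull ℝ ((hypersimplex ι d).extremePoints ℝ)) :=
        (closure_convexHull_extremePoints (isCompact_hypersimplex d) (convex_hypersimplex d)).symm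
    _ ⊆ closure (convexHull ℝ (hypersimplex ι d ∩ univ.pi fun _ ↦ {0, 1})) :=
        closure_mono <| convexHull_mono <|
          subset_inter extremePoints_subset (extremePoints_hypersimplex_subset d)
    _ = convexHull ℝ (hypersimplex ι d ∩ univ.pi fun _ ↦ {0, 1}) :=
        (hfin.isClosed_convexHull ℝ).closure_eq

end Hypersimplex

namespace Matrix

variable {n R : Type*}

lemma isStarProjection_iff_isSymm_and_mul_self [Semiring R] [StarRing R] [TrivialStar R]
    [Fintype n] {P : Matrix n n R} : IsStarProjection P ↔ P.IsSymm ∧ P * P = P := by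
  rw [isStarProjection_iff, and_comm, IsSelfAdjoint, star_eq_conjTranspose,
    conjTranspose_eq_transpose_of_trivial]
  rfl

lemma isStarProjection_diagonal [Semiring R] [StarRing R] [TrivialStar R] [Fintype n]
    [DecidableEq n] {y : n → R} (hy : y ∈ univ.pi fun _ ↦ {0, 1}) :
    IsStarProjection (diagonal y) := by
  refine ⟨?_, isHermitian_diagonal y⟩
  rw [IsIdempotentElem, diagonal_mul_diagonal]
  congr 1
  ext i
  obtain h | h : y i = 0 ∨ y i = 1 := hy i trivial <;> simp [h]

lemma trace_conjStarAlgAut [CommRing R] [StarRing R] [Fintype n] [DecidableEq n]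
    (U : unitary (Matrix n n R)) (A : Matrix n n R) :
    (Unitary.conjStarAlgAut R _ U A).trace = A.trace := by
  rw [Unitary.conjStarAlgAut_apply, trace_mul_cycle, Unitary.coe_star_mul_self, one_mul]

lemma diagonal_mem_Icc_iff [Fintype n] [DecidableEq n] {y : n → ℝ} :
    diagonal y ∈ Icc 0 1 ↔ y ∈ Icc 0 1 := by
  simp [Matrix.le_iff, ← diagonal_one, diagonal_sub, Pi.le_def, sub_nonneg]

lemma IsHermitian.eigenvalues_mem_Icc [Fintype n] [DecidableEq n] {P : Matrix n n ℝ}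
    (hP : P.IsHermitian) (hP' : P ∈ Icc 0 1) : hP.eigenvalues ∈ Icc 0 1 := by
  have hdiag := hP.conjStarAlgAut_star_eigenvectorUnitary
  simp only [RCLike.ofReal_real_eq_id, Function.id_comp] at hdiag
  rw [← diagonal_mem_Icc_iff, ← hdiag]
  set f := Unitary.conjStarAlgAut ℝ _ (star hP.eigenvectorUnitary)
  exact ⟨map_zero f ▸ OrderHomClass.mono f hP'.1, map_one f ▸ OrderHomClass.mono f hP'.2⟩

theorem mem_convexHull_isStarProjection [Fintype n] [DecidableEq n] {d : ℕ} {P : Matrix n n ℝ}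
    (hP : P ∈ Icc 0 1) (htr : P.trace = d) :
    P ∈ convexHull ℝ {Q | IsStarProjection Q ∧ Q.trace = (d : ℝ)} := by
  have hH : P.IsHermitian := hP.1.posSemidef.isHermitian
  set U := Unitary.conjStarAlgAut ℝ _ hH.eigenvectorUnitary
  let f : (n → ℝ) →ₗ[ℝ] Matrix n n ℝ := U.toAlgEquiv.toLinearMap ∘ₗ diagonalLinearMap n ℝ ℝ
  have hPf : P = f hH.eigenvalues := by simpa [f, U] using hH.spectral_theorem
  have hev : hH.eigenvalues ∈ hypersimplex n d :=
    ⟨hH.eigenvalues_mem_Icc hP, by simpa [← htr] using hH.trace_eq_sum_eigenvalues.symm⟩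
  rw [hypersimplex_eq_convexHull] at hev
  have hPmem : P ∈ f '' _ := ⟨_, hev, hPf.symm⟩
  rw [f.image_convexHull] at hPmem
  refine convexHull_mono ?_ hPmem
  rintro _ ⟨y, ⟨⟨-, hsum⟩, hy⟩, rfl⟩
  exact ⟨(isStarProjection_diagonal hy).map U,
    (trace_conjStarAlgAut _ (diagonal y)).trans <| (trace_diagonal y).trans hsum⟩

theorem convexHull_setOf_isStarProjection_trace_eq [Fintype n] [DecidableEq n] (d : ℕ) :
    convexHull ℝ {Q : Matrix n n ℝ | IsStarProjection Q ∧ Q.trace = (d : ℝ)} =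
      Icc 0 1 ∩ {P | P.trace = (d : ℝ)} := by
  refine subset_antisymm (convexHull_min ?_ ?_)
    fun P hP ↦ mem_convexHull_isStarProjection hP.1 hP.2
  · exact fun Q hQ ↦ ⟨⟨hQ.1.nonneg, hQ.1.le_one⟩, hQ.2⟩
  · exact (convex_Icc 0 1).inter (convex_hyperplane (traceLinearMap n ℝ ℝ).isLinear (d : ℝ))

end Matrix

theorem reaper_constraint_set_is_convex_hull_of_orthoprojectors_general
    (D d : ℕ) :
    {P : Matrix (Fin D) (Fin D) ℝ |
        P.PosSemidef ∧ (1 - P).PosSemidef ∧ P.trace = (d : ℝ)} =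
      convexHull ℝ
        {P : Matrix (Fin D) (Fin D) ℝ |
            P.IsSymm ∧ P * P = P ∧ P.trace = (d : ℝ)} := by
  have hproj : {P : Matrix (Fin D) (Fin D) ℝ | P.IsSymm ∧ P * P = P ∧ P.trace = (d : ℝ)} =
      {Q | IsStarProjection Q ∧ Q.trace = (d : ℝ)} := by
    simp only [isStarProjection_iff_isSymm_and_mul_self, and_assoc]
  rw [hproj, convexHull_setOf_isStarProjection_trace_eq]
  ext P
  simp only [mem_ofPred_eq, mem_inter_iff, mem_Icc, Matrix.le_iff, sub_zero, and_assoc]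

/-- For each integer `d` with `0 ≤ d ≤ D`, the set of symmetric
`D × D` real matrices `P` with `0 ≼ P ≼ I` and `tr P = d` is the convex hull of
the set of `D × D` orthogonal projection matrices (symmetric idempotents) with
trace `d`. -/
theorem reaper_constraint_set_is_convex_hull_of_orthoprojectors
    (D d : ℕ) (hd : d ≤ D) :
    {P : Matrix (Fin D) (Fin D) ℝ |
        P.PosSemidef ∧ (1 - P).PosSemidef ∧ P.trace = (d : ℝ)} =
      convexHull ℝ
        {P : Matrix (Fin D) (Fin D) ℝ |
            P.IsSymm ∧ P * P = P ∧ P.trace = (d : ℝ)} :=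
  reaper_constraint_set_is_convex_hull_of_orthoprojectors_general D d
end

section
/- Let Π_L be the orthoprojector onto a subspace L of R^D, and let Δ be a symmetric matrix with 0 ≼ Π_L + Δ ≼ I, tr Δ = 0, and Π_{L⊥} Δ Π_L ≠ 0. Then tr(Π_{L⊥} Δ Π_{L⊥}) = −tr(Π_L Δ Π_L) > 0. -/
/-!
Write `Q = 1 - Pr` and `M = Pr + Δ`. Since `Q Pr = 0`, the block `Q Δ Q = Q M Q` is positive
semidefinite, so its trace is nonnegative, and `tr Δ = 0` makes it equal to `-tr(Pr Δ Pr)`.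
If that trace vanished, then `Q M Q = 0`; factoring `M = Cᴴ C` gives `C Q = 0`, hence `M Q = 0`,
hence `Q M = 0` and `Q Δ Pr = Q M Pr = 0`, contradicting the hypothesis.
-/

open Matrix

namespace Matrix

lemma trace_one_sub_mul_mul_one_sub {n R : Type*} [Fintype n] [DecidableEq n] [CommRing R]
    {P : Matrix n n R} (hP : IsIdempotentElem P) (A : Matrix n n R) :
    ((1 - P) * A * (1 - P)).trace = A.trace - (P * A * P).trace := by
  rw [trace_mul_cycle, hP.one_sub.eq, trace_mul_cycle, hP.eq, sub_mul, one_mul, trace_sub]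

open scoped ComplexOrder MatrixOrder in
lemma PosSemidef.mul_eq_zero_of_conjTranspose_mul_mul_eq_zero {n m 𝕜 : Type*} [Fintype n] [RCLike 𝕜]
    {A : Matrix n n 𝕜} (hA : A.PosSemidef) {B : Matrix n m 𝕜}
    (h : Bᴴ * A * B = 0) : A * B = 0 := by
  classical
  obtain ⟨C, rfl⟩ := CStarAlgebra.nonneg_iff_eq_star_mul_self.mp hA.nonneg
  have hCB : C * B = 0 := by
    rw [← conjTranspose_mul_self_eq_zero, conjTranspose_mul, ← Matrix.mul_assoc]
    simpa [star_eq_conjTranspose, Matrix.mul_assoc] using h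
  rw [Matrix.mul_assoc, hCB, Matrix.mul_zero]

end Matrix

theorem feasible_perturbation_trace_positive_general
    (D : ℕ) (Pr Δ : Matrix (Fin D) (Fin D) ℝ)
    (hProj : Pr.IsSymm ∧ Pr * Pr = Pr)
    (hfeas₁ : (Pr + Δ).PosSemidef)
    (htr : Δ.trace = 0)
    (hΔ₂ : (1 - Pr) * Δ * Pr ≠ 0) :
    ((1 - Pr) * Δ * (1 - Pr)).trace = -(Pr * Δ * Pr).trace ∧
    0 < ((1 - Pr) * Δ * (1 - Pr)).trace := by
  obtain ⟨hPsymm, hPidem⟩ := hProj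
  set Q := 1 - Pr
  have hQ : Qᴴ = Q := by simp [Q, conjTranspose_eq_transpose_of_trivial, hPsymm.eq]
  have hQP : Q * Pr = 0 := by simp [Q, sub_mul, hPidem]
  have hQΔQ : Q * Δ * Q = Qᴴ * (Pr + Δ) * Q := by
    rw [hQ, Matrix.mul_add, Matrix.add_mul, hQP, zero_mul, zero_add]
  refine ⟨by rw [trace_one_sub_mul_mul_one_sub hPidem, htr, zero_sub], ?_⟩
  have hpsd : (Q * Δ * Q).PosSemidef := hQΔQ ▸ hfeas₁.conjTranspose_mul_mul_same Q
  refine hpsd.trace_nonneg.lt_of_ne fun h0 => hΔ₂ ?_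
  have hMQ : (Pr + Δ) * Q = 0 :=
    hfeas₁.mul_eq_zero_of_conjTranspose_mul_mul_eq_zero
      (hQΔQ ▸ hpsd.trace_eq_zero_iff.mp h0.symm)
  have hQM : Q * (Pr + Δ) = 0 := by
    rw [← hQ, ← hfeas₁.isHermitian.eq, ← conjTranspose_mul, hMQ, conjTranspose_zero]
  calc Q * Δ * Pr = Q * (Pr + Δ) * Pr - Q * Pr * Pr := by noncomm_ring
    _ = 0 := by rw [hQM, hQP, zero_mul, sub_self]

/-- With `Pr` the orthoprojector onto a subspace `L ⊆ ℝ^D` and `Δ`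
symmetric with `0 ≼ Pr + Δ ≼ I`, `tr Δ = 0`, and `(I − Pr) Δ Pr ≠ 0`, one has
`tr((I − Pr) Δ (I − Pr)) = − tr(Pr Δ Pr) > 0`. -/
theorem feasible_perturbation_trace_positive
    (D : ℕ) (Pr Δ : Matrix (Fin D) (Fin D) ℝ)
    (hProj : Pr.IsSymm ∧ Pr * Pr = Pr)
    (hΔsymm : Δ.IsSymm)
    (hfeas₁ : (Pr + Δ).PosSemidef)
    (hfeas₂ : (1 - (Pr + Δ)).PosSemidef)
    (htr : Δ.trace = 0)
    (hΔ₂ : (1 - Pr) * Δ * Pr ≠ 0) :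
    ((1 - Pr) * Δ * (1 - Pr)).trace = -(Pr * Δ * Pr).trace ∧
    0 < ((1 - Pr) * Δ * (1 - Pr)).trace :=
  feasible_perturbation_trace_positive_general D Pr Δ hProj hfeas₁ htr hΔ₂
end

section
/- Let L be a d-dimensional subspace of R^D and X_in a finite multiset of vectors in L. Then the infimum over positive semidefinite symmetric matrices M with M = Π_L M Π_L and tr M = 1 of Σ_{x ∈ X_in} ‖M x‖ is at least (1/√d) · inf over unit vectors u ∈ L of Σ_{x ∈ X_in} |⟨u, x⟩|. -/
/-- The Euclidean norm of a vector in `ℝ^D`. -/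
noncomputable def euclNorm {D : ℕ} (x : Fin D → ℝ) : ℝ :=
  Real.sqrt (∑ i, x i ^ 2)

/-!
Diagonalise `M = ∑ λᵢ bᵢ bᵢᵀ` with `λᵢ ≥ 0` and `∑ λᵢ = tr M = 1`. Since `Π_L M = M`, every `bᵢ`
with `λᵢ ≠ 0` is a unit vector of `L`, and there are `rank M ≤ rank Π_L = tr Π_L = d` of them,
so Cauchy–Schwarz gives `∑ᵢ λᵢ |⟨bᵢ, x⟩| ≤ √d ‖M x‖` for every `x`. Summing over `x` and
exchanging the sums, `√d ∑ₓ ‖M x‖` dominates the convex combination `∑ᵢ λᵢ ∑ₓ |⟨bᵢ, x⟩|`, each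
of whose terms is at least the infimum over unit vectors of `L`.
-/

open Matrix
open scoped Finset

lemma euclNorm_eq_norm_toLp {D : ℕ} (x : Fin D → ℝ) : euclNorm x = ‖WithLp.toLp 2 x‖ := by
  simp [euclNorm, EuclideanSpace.norm_eq]

namespace Matrix

theorem rank_eq_trace_of_isIdempotentElem {K n : Type*} [Field K] [Fintype n] [DecidableEq n]
    {P : Matrix n n K} (hP : IsIdempotentElem P) : (P.rank : K) = P.trace := by
  have hP' : IsIdempotentElem (toLin' P) := hP.map toLinAlgEquiv'
  rw [← trace_toLin'_eq, (LinearMap.IsIdempotentElem.isProj_range _ hP').trace]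
  rfl

theorem mulVec_eq_self_of_mul_eq_of_mulVec_eq_smul {K n : Type*} [Field K] [Fintype n]
    {P M : Matrix n n K} (hPM : P * M = M) {v : n → K} {c : K} (hc : c ≠ 0)
    (hv : M *ᵥ v = c • v) : P *ᵥ v = v := by
  have h : P *ᵥ (M *ᵥ v) = M *ᵥ v := by rw [mulVec_mulVec, hPM]
  rw [hv, mulVec_smul] at h
  exact smul_right_injective _ hc h

theorem IsHermitian.posSemidef_of_isIdempotentElem {R : Type*} [CommRing R] [PartialOrder R]
    [StarRing R] [StarOrderedRing R] {n : Type*} [Fintype n] {P : Matrix n n R}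
    (hs : P.IsHermitian) (hP : IsIdempotentElem P) : P.PosSemidef := by
  rw [← hP.eq, ← congrArg (· * P) hs.eq]
  exact posSemidef_conjTranspose_mul_self P

variable {n : Type*} [Fintype n] [DecidableEq n] {M : Matrix n n ℝ}

theorem IsHermitian.eigenvectorBasis_dotProduct_mulVec (hM : M.IsHermitian) (i : n)
    (x : n → ℝ) :
    ⇑(hM.eigenvectorBasis i) ⬝ᵥ (M *ᵥ x) =
      hM.eigenvalues i * (⇑(hM.eigenvectorBasis i) ⬝ᵥ x) := by
  rw [dotProduct_mulVec, ← mulVec_transpose, ← conjTranspose_eq_transpose_of_trivial, hM.eq,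
    mulVec_eigenvectorBasis, smul_dotProduct, smul_eq_mul]

theorem IsHermitian.norm_toLp_mulVec_sq (hM : M.IsHermitian) (x : n → ℝ) :
    ‖WithLp.toLp 2 (M *ᵥ x)‖ ^ 2 =
      ∑ i, (hM.eigenvalues i * (⇑(hM.eigenvectorBasis i) ⬝ᵥ x)) ^ 2 := by
  rw [← hM.eigenvectorBasis.sum_sq_inner_right]
  refine Finset.sum_congr rfl fun i _ => ?_
  rw [← hM.eigenvectorBasis_dotProduct_mulVec, EuclideanSpace.inner_eq_star_dotProduct]
  simp [dotProduct_comm]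

theorem IsHermitian.sum_eigenvalues_mul_abs_dotProduct_le (hM : M.IsHermitian) (x : n → ℝ) :
    ∑ i, hM.eigenvalues i * |⇑(hM.eigenvectorBasis i) ⬝ᵥ x| ≤
      √M.rank * ‖WithLp.toLp 2 (M *ᵥ x)‖ := by
  set f := fun i => hM.eigenvalues i * |⇑(hM.eigenvectorBasis i) ⬝ᵥ x|
  set S := Finset.univ.filter fun i => hM.eigenvalues i ≠ 0
  have hS : ∑ i ∈ S, f i = ∑ i, f i :=
    Finset.sum_filter_of_ne fun i _ hi => left_ne_zero_of_mul hi
  have hcard : #S = M.rank := by rw [hM.rank_eq_card_non_zero_eigs, Fintype.card_subtype]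
  have hnorm := hM.norm_toLp_mulVec_sq x
  have hf_sq : ∀ i, f i ^ 2 = (hM.eigenvalues i * (⇑(hM.eigenvectorBasis i) ⬝ᵥ x)) ^ 2 :=
    fun i => by rw [mul_pow, sq_abs, mul_pow]
  have hCS : (∑ i, f i) ^ 2 ≤ M.rank * ‖WithLp.toLp 2 (M *ᵥ x)‖ ^ 2 := by
    calc (∑ i, f i) ^ 2 = (∑ i ∈ S, f i) ^ 2 := by rw [hS]
      _ ≤ #S * ∑ i ∈ S, f i ^ 2 := sq_sum_le_card_mul_sum_sq
      _ ≤ #S * ∑ i, f i ^ 2 := by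
        gcongr
        exact S.subset_univ
      _ = M.rank * ‖WithLp.toLp 2 (M *ᵥ x)‖ ^ 2 := by simp only [hcard, hf_sq, hnorm]
  calc ∑ i, f i ≤ √(M.rank * ‖WithLp.toLp 2 (M *ᵥ x)‖ ^ 2) := Real.le_sqrt_of_sq_le hCS
    _ = √M.rank * ‖WithLp.toLp 2 (M *ᵥ x)‖ := by
      rw [Real.sqrt_mul M.rank.cast_nonneg, Real.sqrt_sq (norm_nonneg _)]

theorem PosSemidef.le_sqrt_rank_mul_sum_norm_mulVec {P : Matrix n n ℝ} (hM : M.PosSemidef)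
    (htr : M.trace = 1) (hPM : P * M = M) (X : Multiset (n → ℝ)) {c : ℝ}
    (hc : ∀ u : n → ℝ, ‖WithLp.toLp 2 u‖ = 1 → P *ᵥ u = u →
      c ≤ (X.map fun x => |u ⬝ᵥ x|).sum) :
    c ≤ √M.rank * (X.map fun x => ‖WithLp.toLp 2 (M *ᵥ x)‖).sum := by
  set ev := hM.1.eigenvalues
  set b := hM.1.eigenvectorBasis
  have hsum : ∑ i, ev i = 1 := by simpa [htr] using hM.1.trace_eq_sum_eigenvalues.symm
  calc c = ∑ i, ev i * c := by rw [← Finset.sum_mul, hsum, one_mul]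
    _ ≤ ∑ i, ev i * (X.map fun x => |⇑(b i) ⬝ᵥ x|).sum := by
      refine Finset.sum_le_sum fun i _ => ?_
      by_cases hi : ev i = 0
      · simp [hi]
      refine mul_le_mul_of_nonneg_left (hc _ ?_ ?_) (hM.eigenvalues_nonneg i)
      · simp [b]
      · exact mulVec_eq_self_of_mul_eq_of_mulVec_eq_smul hPM hi (hM.1.mulVec_eigenvectorBasis i)
    _ = (X.map fun x => ∑ i, ev i * |⇑(b i) ⬝ᵥ x|).sum := by
      simp only [← Multiset.sum_map_mul_left]
      exact (Multiset.sum_map_sum_map X Finset.univ.val).symm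
    _ ≤ (X.map fun x => √M.rank * ‖WithLp.toLp 2 (M *ᵥ x)‖).sum :=
      Multiset.sum_map_le_sum_map _ _ fun x _ => hM.1.sum_eigenvalues_mul_abs_dotProduct_le x
    _ = √M.rank * (X.map fun x => ‖WithLp.toLp 2 (M *ᵥ x)‖).sum := Multiset.sum_map_mul_left

end Matrix

theorem inf_compressed_ge_inv_sqrt_dim_mul_permeance_general
    (D d : ℕ) (hd : 1 ≤ d) (Pr : Matrix (Fin D) (Fin D) ℝ)
    (hProj : Pr.IsSymm ∧ Pr * Pr = Pr) (hdim : Pr.trace = (d : ℝ))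
    (Xin : Multiset (Fin D → ℝ)) :
    sInf {r : ℝ | ∃ M : Matrix (Fin D) (Fin D) ℝ, M.IsSymm ∧ M.PosSemidef ∧
          M = Pr * M * Pr ∧ M.trace = 1 ∧
          r = (Xin.map fun x => euclNorm (M.mulVec x)).sum}
      ≥
    (1 / Real.sqrt d) *
      sInf {r : ℝ | ∃ u : Fin D → ℝ, euclNorm u = 1 ∧ Pr.mulVec u = u ∧
            r = (Xin.map fun x => |∑ i, u i * x i|).sum} := by
  obtain ⟨hPsymm, hPidem⟩ := hProj
  set B := {r : ℝ | ∃ u : Fin D → ℝ, euclNorm u = 1 ∧ Pr.mulVec u = u ∧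
    r = (Xin.map fun x => |∑ i, u i * x i|).sum}
  have hB : BddBelow B := ⟨0, by
    rintro _ ⟨u, -, -, rfl⟩
    exact Multiset.sum_nonneg (Multiset.forall_mem_map_iff.2 fun x _ => abs_nonneg _)⟩
  have hd_pos : (0 : ℝ) < d := by exact_mod_cast hd
  have hPpsd := (isHermitian_iff_isSymm.2 hPsymm).posSemidef_of_isIdempotentElem hPidem
  refine le_csInf ⟨_, (d : ℝ)⁻¹ • Pr, hPsymm.smul _, hPpsd.smul (inv_nonneg.2 hd_pos.le),
    by rw [Matrix.mul_smul, Matrix.smul_mul, hPidem, hPidem],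
    by rw [trace_smul, hdim, smul_eq_mul, inv_mul_cancel₀ hd_pos.ne'], rfl⟩ ?_
  rintro _ ⟨M, -, hM, hMP, hMtr, rfl⟩
  have hPM : Pr * M = M := by rw [hMP, ← mul_assoc, ← mul_assoc, hPidem]
  have hrank : (M.rank : ℝ) ≤ d := by
    rw [← hdim, ← rank_eq_trace_of_isIdempotentElem hPidem, ← hPM]
    exact_mod_cast rank_mul_le_left Pr M
  have hle := hM.le_sqrt_rank_mul_sum_norm_mulVec hMtr hPM Xin (c := sInf B)
    fun u hu hPu => csInf_le hB ⟨u, by rwa [euclNorm_eq_norm_toLp], hPu, rfl⟩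
  simp only [euclNorm_eq_norm_toLp]
  set S := (Xin.map fun x => ‖WithLp.toLp 2 (M *ᵥ x)‖).sum
  have hS : 0 ≤ S := Multiset.sum_nonneg (Multiset.forall_mem_map_iff.2 fun x _ => norm_nonneg _)
  calc 1 / √d * sInf B ≤ 1 / √d * (√M.rank * S) := by gcongr
    _ ≤ 1 / √d * (√d * S) := by gcongr
    _ = S := by field_simp

/-- Let `L` be a `d`-dimensional subspace of `ℝ^D` (with
orthoprojector `Pr`, `d ≥ 1`) and `Xin` a finite multiset of vectors in `L`.
Then the infimum over positive semidefinite symmetric matrices `M` with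
`M = Pr M Pr` and `tr M = 1` of `Σ_{x ∈ Xin} ‖M x‖` is at least
`(1/√d) ·` the infimum over unit vectors `u ∈ L` of `Σ_{x ∈ Xin} |⟨u, x⟩|`. -/
theorem inf_compressed_ge_inv_sqrt_dim_mul_permeance
    (D d : ℕ) (hd : 1 ≤ d) (Pr : Matrix (Fin D) (Fin D) ℝ)
    (hProj : Pr.IsSymm ∧ Pr * Pr = Pr) (hdim : Pr.trace = (d : ℝ))
    (Xin : Multiset (Fin D → ℝ)) (hXin : ∀ x ∈ Xin, Pr.mulVec x = x) :
    sInf {r : ℝ | ∃ M : Matrix (Fin D) (Fin D) ℝ, M.IsSymm ∧ M.PosSemidef ∧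
          M = Pr * M * Pr ∧ M.trace = 1 ∧
          r = (Xin.map fun x => euclNorm (M.mulVec x)).sum}
      ≥
    (1 / Real.sqrt d) *
      sInf {r : ℝ | ∃ u : Fin D → ℝ, euclNorm u = 1 ∧ Pr.mulVec u = u ∧
            r = (Xin.map fun x => |∑ i, u i * x i|).sum} :=
  inf_compressed_ge_inv_sqrt_dim_mul_permeance_general D d hd Pr hProj hdim Xin
end

section
/- Fix 0 < d < D and nonnegative weights β_x for each x in a finite set X ⊂ R^D. Let C = Σ_x β_x x xᵀ with eigendecomposition C = U Λ Uᵀ, eigenvalues λ_1 ≥ ... ≥ λ_D ≥ 0, and suppose rank C > d. Then there exists θ > 0 with Σ_{i=1}^D (λ_i − θ)_+/λ_i = d, and the matrix P⋆ = U · diag(ν) · Uᵀ with ν_i = (λ_i − θ)_+/λ_i minimizes Σ_{x ∈ X} β_x ‖x − P x‖² over symmetric matrices P with 0 ≼ P ≼ I and tr P = d. -/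
/-!
Write `B = Uᵀ P U` for `P` seen in the eigenbasis of `C`. The objective is
`tr ((1 - P)ᵀ (1 - P) C) = ∑ᵢ λᵢ ∑ⱼ (1 - B)ⱼᵢ² ≥ ∑ᵢ λᵢ (1 - Bᵢᵢ)²`, and the diagonal of `B` is
nonnegative with sum `tr P = d`. On that constraint set the multiplier term `2θ ∑ᵢ (1 - Bᵢᵢ)` is
constant, so the bound splits into the scalar problems `min λ q² - 2θ q` over `q ≤ 1`, solved by
`q = min 1 (θ / λ) = 1 - νᵢ`. The intermediate value theorem provides the level `θ` with
`∑ νᵢ = d`, and for `P⋆` the matrix `B` is `diag ν`, so every inequality is an equality.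
-/

open Matrix Finset

/-- `ν_i = (λ_i - θ)_+ / λ_i`; at `λ_i = 0` division by zero gives the convention `0 / 0 = 0`. -/
noncomputable def waterFill (θ l : ℝ) : ℝ := max (l - θ) 0 / l

section WaterFill

lemma waterFill_nonneg {l : ℝ} (hl : 0 ≤ l) (θ : ℝ) : 0 ≤ waterFill θ l :=
  div_nonneg (le_max_right _ _) hl

lemma waterFill_le_one {l θ : ℝ} (hl : 0 ≤ l) (hθ : 0 ≤ θ) : waterFill θ l ≤ 1 := by
  rcases hl.eq_or_lt with rfl | hl
  · simp [waterFill]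
  · exact (div_le_one hl).2 (max_le (by linarith) hl.le)

lemma waterFill_of_le {l θ : ℝ} (h : l ≤ θ) : waterFill θ l = 0 := by
  simp [waterFill, h]

lemma waterFill_zero {l : ℝ} (hl : 0 ≤ l) : waterFill 0 l = if l = 0 then 0 else 1 := by
  split_ifs with h
  · simp [waterFill, h]
  · simp [waterFill, max_eq_left hl, h]

lemma continuous_waterFill (l : ℝ) : Continuous fun θ => waterFill θ l :=
  ((continuous_const.sub continuous_id).max continuous_const).div_const _

/-- `1 - waterFill θ l = min 1 (θ / l)` minimizes the Lagrangian `l q² - 2 θ q` over `q ≤ 1`. -/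
lemma lagrangian_one_sub_waterFill_le {l θ q : ℝ} (hl : 0 ≤ l) (hθ : 0 < θ) (hq1 : q ≤ 1) :
    l * (1 - waterFill θ l) ^ 2 - 2 * θ * (1 - waterFill θ l) ≤ l * q ^ 2 - 2 * θ * q := by
  rcases le_or_gt l θ with h | h
  · rw [waterFill_of_le h]
    nlinarith [mul_nonneg (sub_nonneg.2 hq1) (sub_nonneg.2 h), mul_nonneg hl (sq_nonneg (1 - q))]
  · have hl : 0 < l := hθ.trans h
    have hw : 1 - waterFill θ l = θ / l := by
      rw [waterFill, max_eq_left (by linarith)]; field_simp; ring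
    have hgap :
        l * q ^ 2 - 2 * θ * q - (l * (θ / l) ^ 2 - 2 * θ * (θ / l)) = (l * q - θ) ^ 2 / l := by
      field_simp; ring
    rw [hw]
    linarith [div_nonneg (sq_nonneg (l * q - θ)) hl.le]

variable {ι : Type*} [Fintype ι]

lemma sum_mul_one_sub_waterFill_sq_le {lam q : ι → ℝ} {θ : ℝ} (hlam : ∀ i, 0 ≤ lam i)
    (hθ : 0 < θ) (hq1 : ∀ i, q i ≤ 1)
    (hsum : ∑ i, q i = ∑ i, (1 - waterFill θ (lam i))) :
    ∑ i, lam i * (1 - waterFill θ (lam i)) ^ 2 ≤ ∑ i, lam i * q i ^ 2 := by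
  have h := Finset.sum_le_sum fun i (_ : i ∈ univ) =>
    lagrangian_one_sub_waterFill_le (hlam i) hθ (hq1 i)
  rw [sum_sub_distrib, sum_sub_distrib, ← mul_sum, ← mul_sum, hsum] at h
  linarith

lemma sum_waterFill_zero {lam : ι → ℝ} (hlam : ∀ i, 0 ≤ lam i) :
    ∑ i, waterFill 0 (lam i) = Fintype.card {i // lam i ≠ 0} := by
  simp_rw [waterFill_zero (hlam _), Fintype.card_subtype]
  rw [← sum_boole]
  exact sum_congr rfl fun i _ => by split_ifs <;> simp_all

lemma exists_pos_sum_waterFill_eq {lam : ι → ℝ} (hlam : ∀ i, 0 ≤ lam i) {d : ℕ}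
    (hd : d < Fintype.card {i // lam i ≠ 0}) :
    ∃ θ, 0 < θ ∧ ∑ i, waterFill θ (lam i) = d := by
  set f : ℝ → ℝ := fun θ => ∑ i, waterFill θ (lam i)
  have hf : Continuous f := continuous_finsetSum _ fun i _ => continuous_waterFill (lam i)
  have hf0 : f 0 = Fintype.card {i // lam i ≠ 0} := sum_waterFill_zero hlam
  -- no `lam i` exceeds `∑ lam`, so at that level every term vanishes
  have hfM : f (∑ i, lam i) = 0 :=
    sum_eq_zero fun i _ => waterFill_of_le (single_le_sum (fun j _ => hlam j) (mem_univ i))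
  have hd_mem : (d : ℝ) ∈ Set.Icc (f (∑ i, lam i)) (f 0) := by
    rw [hfM, hf0]; exact ⟨d.cast_nonneg, by exact_mod_cast hd.le⟩
  obtain ⟨θ, hθ, hfθ⟩ :=
    intermediate_value_Icc' (sum_nonneg fun i _ => hlam i) hf.continuousOn hd_mem
  refine ⟨θ, hθ.1.lt_of_ne ?_, hfθ⟩
  rintro rfl
  rw [hf0, Nat.cast_inj] at hfθ
  omega

end WaterFill

section Matrix

variable {n : Type*} [Fintype n]

lemma trace_transpose_mul_self_mul_vecMulVec (Q : Matrix n n ℝ) (x : n → ℝ) :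
    (Qᵀ * Q * vecMulVec x x).trace = ∑ j, (Q *ᵥ x) j ^ 2 := by
  rw [mul_vecMulVec, trace_vecMulVec, ← mulVec_mulVec, mulVec_transpose, ← dotProduct_mulVec]
  simp only [dotProduct, sq]

lemma posSemidef_transpose_conj {P : Matrix n n ℝ} (hP : P.PosSemidef) (U : Matrix n n ℝ) :
    (Uᵀ * P * U).PosSemidef := by
  simpa only [conjTranspose_eq_transpose_of_trivial] using hP.conjTranspose_mul_mul_same U

variable [DecidableEq n]

lemma sum_mul_sum_sub_mulVec_sq (X : Finset (n → ℝ)) (β : (n → ℝ) → ℝ) (P : Matrix n n ℝ) :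
    ∑ x ∈ X, β x * ∑ j, (x j - (P *ᵥ x) j) ^ 2
      = ((1 - P)ᵀ * (1 - P) * ∑ x ∈ X, β x • vecMulVec x x).trace := by
  simp only [Matrix.mul_sum, Matrix.mul_smul, trace_sum, trace_smul, smul_eq_mul,
    trace_transpose_mul_self_mul_vecMulVec, sub_mulVec, one_mulVec, Pi.sub_apply]

lemma trace_transpose_mul_self_mul_diagonal (A : Matrix n n ℝ) (lam : n → ℝ) :
    (Aᵀ * A * diagonal lam).trace = ∑ i, lam i * ∑ j, A j i ^ 2 := by
  simp only [trace, Matrix.diag, mul_diagonal]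
  simp only [mul_apply, transpose_apply, sq]
  exact sum_congr rfl fun i _ => mul_comm _ _

lemma trace_transpose_mul_self_mul_conj_diagonal {U : Matrix n n ℝ} (hU : U * Uᵀ = 1)
    (Q : Matrix n n ℝ) (lam : n → ℝ) :
    (Qᵀ * Q * (U * diagonal lam * Uᵀ)).trace = ∑ i, lam i * ∑ j, (Uᵀ * Q * U) j i ^ 2 := by
  have h : (Uᵀ * Q * U)ᵀ * (Uᵀ * Q * U) = Uᵀ * (Qᵀ * Q) * U := by
    simp only [transpose_mul, transpose_transpose, Matrix.mul_assoc]
    rw [← Matrix.mul_assoc U, hU, Matrix.one_mul]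
  rw [← trace_transpose_mul_self_mul_diagonal, h, ← Matrix.mul_assoc, trace_mul_cycle,
    ← Matrix.mul_assoc, ← Matrix.mul_assoc]

lemma posSemidef_conj_diagonal (U : Matrix n n ℝ) {ν : n → ℝ} (hν : 0 ≤ ν) :
    (U * diagonal ν * Uᵀ).PosSemidef := by
  simpa only [conjTranspose_eq_transpose_of_trivial] using
    (PosSemidef.diagonal hν).mul_mul_conjTranspose_same U

lemma one_sub_conj_diagonal {U : Matrix n n ℝ} (hU : U * Uᵀ = 1) (ν : n → ℝ) :
    1 - U * diagonal ν * Uᵀ = U * diagonal (1 - ν) * Uᵀ := by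
  have h : diagonal (1 - ν) = 1 - diagonal ν := by rw [← diagonal_one, diagonal_sub]; rfl
  rw [h, Matrix.mul_sub, Matrix.sub_mul, Matrix.mul_one, hU]

lemma trace_conj {U : Matrix n n ℝ} (hU : U * Uᵀ = 1) (M : Matrix n n ℝ) :
    (U * M * Uᵀ).trace = M.trace := by
  rw [trace_mul_cycle, mul_eq_one_comm.mp hU, Matrix.one_mul]

lemma transpose_conj_conj {U : Matrix n n ℝ} (hU : U * Uᵀ = 1) (M : Matrix n n ℝ) :
    Uᵀ * (U * M * Uᵀ) * U = M := by
  have hUtU : Uᵀ * U = 1 := mul_eq_one_comm.mp hU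
  simp only [← Matrix.mul_assoc, hUtU, Matrix.one_mul]
  rw [Matrix.mul_assoc, hUtU, Matrix.mul_one]

theorem trace_one_sub_conj_waterFill_le {U : Matrix n n ℝ} (hU : U * Uᵀ = 1) {lam : n → ℝ}
    (hlam : ∀ i, 0 ≤ lam i) {θ : ℝ} (hθ : 0 < θ) {P : Matrix n n ℝ} (hP : P.PosSemidef)
    (htr : P.trace = ∑ i, waterFill θ (lam i)) :
    ((1 - U * diagonal (fun i => waterFill θ (lam i)) * Uᵀ)ᵀ *
        (1 - U * diagonal (fun i => waterFill θ (lam i)) * Uᵀ) * (U * diagonal lam * Uᵀ)).trace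
      ≤ ((1 - P)ᵀ * (1 - P) * (U * diagonal lam * Uᵀ)).trace := by
  set B := Uᵀ * P * U
  have hB : Uᵀ * (1 - P) * U = 1 - B := by
    rw [Matrix.mul_sub, Matrix.sub_mul, Matrix.mul_one, mul_eq_one_comm.mp hU]
  have hBdiag : ∀ i, (1 - B) i i ≤ 1 := fun i => by
    simpa using (posSemidef_transpose_conj hP U).diag_nonneg
  have hBsum : ∑ i, (1 - B) i i = ∑ i, (1 - waterFill θ (lam i)) := by
    have hBtr : B.trace = P.trace := by
      rw [trace_mul_cycle, hU, Matrix.one_mul]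
    change (1 - B).trace = _
    rw [trace_sub, trace_one, sum_sub_distrib, ← htr, hBtr]
    simp
  rw [trace_transpose_mul_self_mul_conj_diagonal hU, trace_transpose_mul_self_mul_conj_diagonal hU,
    one_sub_conj_diagonal hU, transpose_conj_conj hU, hB]
  calc ∑ i, lam i * ∑ j, diagonal (1 - fun i => waterFill θ (lam i)) j i ^ 2
      = ∑ i, lam i * (1 - waterFill θ (lam i)) ^ 2 := by
        simp [diagonal_apply]
    _ ≤ ∑ i, lam i * (1 - B) i i ^ 2 := sum_mul_one_sub_waterFill_sq_le hlam hθ hBdiag hBsum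
    _ ≤ ∑ i, lam i * ∑ j, (1 - B) j i ^ 2 := sum_le_sum fun i _ =>
        mul_le_mul_of_nonneg_left
          (single_le_sum (f := fun j => (1 - B) j i ^ 2) (fun j _ => sq_nonneg _) (mem_univ i))
          (hlam i)

end Matrix

theorem weighted_least_squares_water_filling_general
    (D d : ℕ)
    (X : Finset (Fin D → ℝ)) (β : (Fin D → ℝ) → ℝ)
    (U : Matrix (Fin D) (Fin D) ℝ) (hU : U * U.transpose = 1)
    (lam : Fin D → ℝ)
    (hnonneg : ∀ i, 0 ≤ lam i)
    (hC : (∑ x ∈ X, β x • Matrix.vecMulVec x x) =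
        U * Matrix.diagonal lam * U.transpose)
    (hrank : d < (∑ x ∈ X, β x • Matrix.vecMulVec x x).rank) :
    ∃ θ : ℝ, 0 < θ ∧ (∑ i, max (lam i - θ) 0 / lam i) = (d : ℝ) ∧
      ((U * Matrix.diagonal (fun i => max (lam i - θ) 0 / lam i) *
          U.transpose).PosSemidef ∧
        (1 - U * Matrix.diagonal (fun i => max (lam i - θ) 0 / lam i) *
            U.transpose).PosSemidef ∧
        (U * Matrix.diagonal (fun i => max (lam i - θ) 0 / lam i) *
            U.transpose).trace = (d : ℝ)) ∧
      ∀ P : Matrix (Fin D) (Fin D) ℝ,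
        P.PosSemidef → (1 - P).PosSemidef → P.trace = (d : ℝ) →
        (∑ x ∈ X, β x * ∑ j, (x j -
            (U * Matrix.diagonal (fun i => max (lam i - θ) 0 / lam i) *
              U.transpose).mulVec x j) ^ 2)
          ≤ ∑ x ∈ X, β x * ∑ j, (x j - P.mulVec x j) ^ 2 := by
  classical
  have hcard : d < Fintype.card {i // lam i ≠ 0} :=
    calc d < _ := hrank
      _ ≤ (diagonal lam).rank := by
        rw [hC]; exact (rank_mul_le_left _ _).trans (rank_mul_le_right _ _)
      _ = _ := rank_diagonal lam
  obtain ⟨θ, hθ, hsum⟩ := exists_pos_sum_waterFill_eq hnonneg hcard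
  have hν : 0 ≤ fun i => waterFill θ (lam i) := fun i => waterFill_nonneg (hnonneg i) θ
  have hν' : 0 ≤ 1 - fun i => waterFill θ (lam i) := fun i =>
    sub_nonneg.2 (waterFill_le_one (hnonneg i) hθ.le)
  refine ⟨θ, hθ, hsum, ⟨posSemidef_conj_diagonal U hν, ?_, ?_⟩, fun P hP _ hPtr => ?_⟩
  · rw [one_sub_conj_diagonal hU]
    exact posSemidef_conj_diagonal U hν'
  · exact (trace_conj hU _).trans ((trace_diagonal _).trans hsum)
  · rw [sum_mul_sum_sub_mulVec_sq, sum_mul_sum_sub_mulVec_sq, hC]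
    exact trace_one_sub_conj_waterFill_le hU hnonneg hθ hP (hPtr.trans hsum.symm)

/-- water-filling solution of the weighted least-squares
subproblem.  Fix `0 < d < D` and nonnegative weights `β_x` on a finite set
`X ⊆ ℝ^D`.  Let `C = Σ_x β_x x xᵀ` have eigendecomposition `C = U Λ Uᵀ` with
`λ_1 ≥ … ≥ λ_D ≥ 0` and `rank C > d`.  Then there is `θ > 0` with
`Σ_i (λ_i − θ)_+ / λ_i = d`, and `P⋆ = U diag(ν) Uᵀ`, `ν_i = (λ_i − θ)_+/λ_i`,
minimizes `Σ_x β_x ‖x − P x‖²` over symmetric `P` with `0 ≼ P ≼ I`,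
`tr P = d`. -/
theorem weighted_least_squares_water_filling
    (D d : ℕ) (hd0 : 0 < d) (hdD : d < D)
    (X : Finset (Fin D → ℝ)) (β : (Fin D → ℝ) → ℝ) (hβ : ∀ x ∈ X, 0 ≤ β x)
    (U : Matrix (Fin D) (Fin D) ℝ) (hU : U * U.transpose = 1)
    (lam : Fin D → ℝ)
    (hmono : ∀ i j : Fin D, i ≤ j → lam j ≤ lam i)
    (hnonneg : ∀ i, 0 ≤ lam i)
    (hC : (∑ x ∈ X, β x • Matrix.vecMulVec x x) =
        U * Matrix.diagonal lam * U.transpose)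
    (hrank : d < (∑ x ∈ X, β x • Matrix.vecMulVec x x).rank) :
    ∃ θ : ℝ, 0 < θ ∧ (∑ i, max (lam i - θ) 0 / lam i) = (d : ℝ) ∧
      ((U * Matrix.diagonal (fun i => max (lam i - θ) 0 / lam i) *
          U.transpose).PosSemidef ∧
        (1 - U * Matrix.diagonal (fun i => max (lam i - θ) 0 / lam i) *
            U.transpose).PosSemidef ∧
        (U * Matrix.diagonal (fun i => max (lam i - θ) 0 / lam i) *
            U.transpose).trace = (d : ℝ)) ∧
      ∀ P : Matrix (Fin D) (Fin D) ℝ,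
        P.PosSemidef → (1 - P).PosSemidef → P.trace = (d : ℝ) →
        (∑ x ∈ X, β x * ∑ j, (x j -
            (U * Matrix.diagonal (fun i => max (lam i - θ) 0 / lam i) *
              U.transpose).mulVec x j) ^ 2)
          ≤ ∑ x ∈ X, β x * ∑ j, (x j - P.mulVec x j) ^ 2 :=
  weighted_least_squares_water_filling_general D d X β U hU lam hnonneg hC hrank
end

section
/- Fix 0 < d < D and a finite set X ⊂ R^D. For every symmetric matrix P with 0 ≼ P and tr P = d there exists a symmetric matrix P′ with 0 ≼ P′ ≼ I, tr P′ = d, and Σ_{x ∈ X} ‖x − P′x‖ ≤ Σ_{x ∈ X} ‖x − Px‖. Consequently the problem minimizing Σ_{x ∈ X} ‖x − Px‖ subject to 0 ≼ P and tr P = d has an optimal point satisfying P ≼ I. -/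
open Matrix

theorem exists_mem_Icc_sum_eq_abs_one_sub_le {ι : Type*} [Fintype ι] (l : ι → ℝ)
    (hl : ∀ i, 0 ≤ l i) (hsum : ∑ i, l i ≤ Fintype.card ι) :
    ∃ l' : ι → ℝ, (∀ i, l' i ∈ Set.Icc 0 1) ∧ ∑ i, l' i = ∑ i, l i ∧
      ∀ i, |1 - l' i| ≤ |1 - l i| := by
  set r : ι → ℝ := fun i => max (1 - l i) 0
  set θ : ℝ := (Fintype.card ι - ∑ i, l i) / ∑ i, r i
  have hr0 : 0 ≤ ∑ i, r i := Finset.sum_nonneg fun i _ => le_max_right _ _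
  have hsum_r : (Fintype.card ι : ℝ) - ∑ i, l i ≤ ∑ i, r i := by
    rw [← Finset.card_univ, ← nsmul_one, ← Finset.sum_const, ← Finset.sum_sub_distrib]
    exact Finset.sum_le_sum fun i _ => le_max_left _ _
  have hθ0 : 0 ≤ θ := div_nonneg (sub_nonneg.2 hsum) hr0
  have hθ1 : θ ≤ 1 := div_le_one_of_le₀ hsum_r hr0
  have hθr : θ * ∑ i, r i = Fintype.card ι - ∑ i, l i :=
    div_mul_cancel_of_imp fun h => le_antisymm (h ▸ hsum_r) (sub_nonneg.2 hsum)
  have hθri (i : ι) : 0 ≤ θ * r i ∧ θ * r i ≤ r i ∧ r i ≤ 1 :=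
    ⟨mul_nonneg hθ0 (le_max_right _ _), mul_le_of_le_one_left (le_max_right _ _) hθ1,
      max_le (by linarith [hl i]) zero_le_one⟩
  refine ⟨fun i => 1 - θ * r i, fun i => ⟨?_, ?_⟩, ?_, fun i => ?_⟩
  · linarith [hθri i]
  · linarith [hθri i]
  · simp [Finset.sum_sub_distrib, ← Finset.mul_sum, hθr]
  · rw [sub_sub_cancel, abs_of_nonneg (hθri i).1]
    exact (hθri i).2.1.trans (max_le (le_abs_self _) (abs_nonneg _))

theorem euclNorm_eq_sqrt_dotProduct {D : ℕ} (x : Fin D → ℝ) : euclNorm x = √(x ⬝ᵥ x) := by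
  simp [euclNorm, dotProduct, sq]

@[fun_prop]
theorem continuous_euclNorm {D : ℕ} : Continuous (euclNorm : (Fin D → ℝ) → ℝ) := by
  unfold euclNorm; fun_prop

theorem euclNorm_le_of_abs_le {D : ℕ} {x y : Fin D → ℝ} (h : ∀ i, |x i| ≤ |y i|) :
    euclNorm x ≤ euclNorm y :=
  Real.sqrt_le_sqrt <| Finset.sum_le_sum fun i _ => sq_le_sq.2 (h i)

theorem euclNorm_unitary_mulVec {D : ℕ} {U : Matrix (Fin D) (Fin D) ℝ}
    (hU : U ∈ unitaryGroup (Fin D) ℝ) (x : Fin D → ℝ) : euclNorm (U *ᵥ x) = euclNorm x := by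
  have hUt : Uᵀ * U = 1 := mem_unitaryGroup_iff'.1 hU
  rw [euclNorm_eq_sqrt_dotProduct, euclNorm_eq_sqrt_dotProduct, dotProduct_mulVec,
    ← mulVec_transpose, mulVec_mulVec, hUt, one_mulVec, dotProduct_comm]

section UnitaryConj

variable {n : Type*} [Fintype n] [DecidableEq n] {U : Matrix n n ℝ}

theorem trace_unitary_conj_diagonal (hU : U ∈ unitaryGroup n ℝ) (f : n → ℝ) :
    (U * diagonal f * star U).trace = ∑ i, f i := by
  rw [trace_mul_cycle, mem_unitaryGroup_iff'.1 hU, one_mul, trace_diagonal]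

theorem one_sub_unitary_conj_diagonal (hU : U ∈ unitaryGroup n ℝ) (f : n → ℝ) :
    1 - U * diagonal f * star U = U * diagonal (1 - f) * star U := by
  rw [show diagonal (1 - f) = diagonal 1 - diagonal f from (diagonal_sub 1 f).symm,
    diagonal_one', mul_sub, sub_mul, mul_one, mem_unitaryGroup_iff.1 hU]

theorem posSemidef_mul_diagonal_mul_star {f : n → ℝ} (hf : 0 ≤ f) :
    (U * diagonal f * star U).PosSemidef :=
  (PosSemidef.diagonal hf).mul_mul_conjTranspose_same U

end UnitaryConj

theorem euclNorm_unitary_conj_diagonal_mulVec_le {D : ℕ} {U : Matrix (Fin D) (Fin D) ℝ}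
    (hU : U ∈ unitaryGroup (Fin D) ℝ) {f g : Fin D → ℝ} (hfg : ∀ i, |f i| ≤ |g i|)
    (x : Fin D → ℝ) :
    euclNorm ((U * diagonal f * star U) *ᵥ x) ≤ euclNorm ((U * diagonal g * star U) *ᵥ x) := by
  simp only [← mulVec_mulVec, euclNorm_unitary_mulVec hU]
  exact euclNorm_le_of_abs_le fun i => by
    rw [mulVec_diagonal, mulVec_diagonal, abs_mul, abs_mul]
    exact mul_le_mul_of_nonneg_right (hfg i) (abs_nonneg _)

theorem exists_posSemidef_one_sub_posSemidef_euclNorm_le {D : ℕ}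
    {P : Matrix (Fin D) (Fin D) ℝ} (hP : P.PosSemidef) (htr : P.trace ≤ D) :
    ∃ P' : Matrix (Fin D) (Fin D) ℝ, P'.PosSemidef ∧ (1 - P').PosSemidef ∧
      P'.trace = P.trace ∧ ∀ x, euclNorm (x - P' *ᵥ x) ≤ euclNorm (x - P *ᵥ x) := by
  set U : Matrix (Fin D) (Fin D) ℝ := ↑hP.1.eigenvectorUnitary
  have hU : U ∈ unitaryGroup (Fin D) ℝ := hP.1.eigenvectorUnitary.2
  set l := hP.1.eigenvalues
  have hPU : P = U * diagonal l * star U := by simpa using hP.1.spectral_theorem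
  have htrl : P.trace = ∑ i, l i := by rw [hPU, trace_unitary_conj_diagonal hU]
  obtain ⟨l', hl'01, hl'sum, hl'l⟩ :=
    exists_mem_Icc_sum_eq_abs_one_sub_le l hP.eigenvalues_nonneg (by simpa [htrl] using htr)
  refine ⟨U * diagonal l' * star U, posSemidef_mul_diagonal_mul_star fun i => (hl'01 i).1,
    ?_, by rw [trace_unitary_conj_diagonal hU, hl'sum, htrl], fun x => ?_⟩
  · rw [one_sub_unitary_conj_diagonal hU]
    exact posSemidef_mul_diagonal_mul_star fun i => sub_nonneg.2 (hl'01 i).2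
  · have hsub (A : Matrix (Fin D) (Fin D) ℝ) : x - A *ᵥ x = (1 - A) *ᵥ x := by
      rw [sub_mulVec, one_mulVec]
    rw [hPU, hsub, hsub, one_sub_unitary_conj_diagonal hU, one_sub_unitary_conj_diagonal hU]
    exact euclNorm_unitary_conj_diagonal_mulVec_le hU hl'l x

theorem IsCompact.exists_isMinOn_of_forall_exists_le {α β : Type*} [TopologicalSpace α]
    [LinearOrder β] [TopologicalSpace β] [ClosedIicTopology β] {K S : Set α} {f : α → β}
    (hK : IsCompact K) (hne : K.Nonempty) (hf : ContinuousOn f K)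
    (himp : ∀ x ∈ S, ∃ y ∈ K, f y ≤ f x) : ∃ x ∈ K, IsMinOn f S x :=
  let ⟨x, hxK, hx⟩ := hK.exists_isMinOn hne hf
  ⟨x, hxK, fun y hy => let ⟨_, hzK, hz⟩ := himp y hy; (hx hzK).trans hz⟩

namespace Matrix

theorem PosSemidef.sq_apply_le {n : Type*} {A : Matrix n n ℝ} (hA : A.PosSemidef) (i j : n) :
    A i j ^ 2 ≤ A i i * A j j := by
  have h := (hA.submatrix ![i, j]).det_nonneg
  rw [det_fin_two] at h
  simp only [submatrix_apply, Matrix.cons_val_zero, Matrix.cons_val_one] at h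
  have hji : A j i = A i j := by simpa using hA.1.apply i j
  rw [hji] at h
  nlinarith

variable {n : Type*} [Fintype n]

theorem isClosed_setOf_posSemidef : IsClosed {A : Matrix n n ℝ | A.PosSemidef} := by
  simp_rw [posSemidef_iff_dotProduct_mulVec, Set.ofPred_and, Set.ofPred_forall]
  exact (isClosed_eq continuous_id.matrix_conjTranspose continuous_id).inter <|
    isClosed_iInter fun x => isClosed_le continuous_const <|
      continuous_const.dotProduct (continuous_id.matrix_mulVec continuous_const)

variable [DecidableEq n]

theorem isCompact_setOf_posSemidef_one_sub_posSemidef :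
    IsCompact {A : Matrix n n ℝ | A.PosSemidef ∧ (1 - A).PosSemidef} := by
  refine (isCompact_univ_pi fun _ => isCompact_univ_pi fun _ => isCompact_Icc (a := -1) (b := 1))
    |>.of_isClosed_subset (isClosed_setOf_posSemidef.inter
      (isClosed_setOf_posSemidef.preimage (continuous_const.sub continuous_id))) ?_
  rintro (A : Matrix n n ℝ) ⟨hA, hA1⟩ i - j -
  have hdiag (k : n) : 0 ≤ A k k ∧ A k k ≤ 1 := by
    have h1 := hA1.diag_nonneg (i := k)
    rw [sub_apply, one_apply_eq, sub_nonneg] at h1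
    exact ⟨hA.diag_nonneg, h1⟩
  have hsq : A i j ^ 2 ≤ 1 :=
    (hA.sq_apply_le i j).trans (mul_le_one₀ (hdiag i).2 (hdiag j).1 (hdiag j).2)
  exact abs_le.1 (sq_le_one_iff_abs_le_one _ |>.1 hsq)

theorem exists_posSemidef_one_sub_posSemidef_trace_eq {t : ℝ} (h0 : 0 ≤ t)
    (ht : t ≤ Fintype.card n) :
    ∃ A : Matrix n n ℝ, A.PosSemidef ∧ (1 - A).PosSemidef ∧ A.trace = t := by
  set c := t / Fintype.card n
  have hc1 : c ≤ 1 := div_le_one_of_le₀ ht (Nat.cast_nonneg _)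
  refine ⟨c • 1, PosSemidef.one.smul (div_nonneg h0 (Nat.cast_nonneg _)), ?_, ?_⟩
  · rw [show 1 - c • (1 : Matrix n n ℝ) = (1 - c) • 1 by rw [sub_smul, one_smul]]
    exact PosSemidef.one.smul (sub_nonneg.2 hc1)
  · rw [trace_smul, trace_one, smul_eq_mul]
    exact div_mul_cancel_of_imp fun h => le_antisymm (h ▸ ht) h0

end Matrix

theorem weak_reaper_has_bounded_solution_general
    (D d : ℕ) (hdD : d < D) (X : Finset (Fin D → ℝ)) :
    (∀ P : Matrix (Fin D) (Fin D) ℝ, P.PosSemidef → P.trace = (d : ℝ) →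
      ∃ P' : Matrix (Fin D) (Fin D) ℝ, P'.PosSemidef ∧ (1 - P').PosSemidef ∧
        P'.trace = (d : ℝ) ∧
        (∑ x ∈ X, euclNorm (x - P'.mulVec x)) ≤
          ∑ x ∈ X, euclNorm (x - P.mulVec x)) ∧
    ∃ Pstar : Matrix (Fin D) (Fin D) ℝ, Pstar.PosSemidef ∧
      (1 - Pstar).PosSemidef ∧ Pstar.trace = (d : ℝ) ∧
      ∀ P : Matrix (Fin D) (Fin D) ℝ, P.PosSemidef → P.trace = (d : ℝ) →
        (∑ x ∈ X, euclNorm (x - Pstar.mulVec x)) ≤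
          ∑ x ∈ X, euclNorm (x - P.mulVec x) := by
  have hdD' : (d : ℝ) ≤ Fintype.card (Fin D) := by simpa using hdD.le
  have improve (P : Matrix (Fin D) (Fin D) ℝ) (hP : P.PosSemidef) (htr : P.trace = d) :
      ∃ P' : Matrix (Fin D) (Fin D) ℝ, P'.PosSemidef ∧ (1 - P').PosSemidef ∧ P'.trace = d ∧
        ∑ x ∈ X, euclNorm (x - P' *ᵥ x) ≤ ∑ x ∈ X, euclNorm (x - P *ᵥ x) := by
    obtain ⟨P', hP', hP'1, htr', hle⟩ :=
      exists_posSemidef_one_sub_posSemidef_euclNorm_le hP (by simpa [htr] using hdD')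
    exact ⟨P', hP', hP'1, htr'.trans htr, Finset.sum_le_sum fun x _ => hle x⟩
  have hK : IsCompact ({P : Matrix (Fin D) (Fin D) ℝ | P.PosSemidef ∧ (1 - P).PosSemidef} ∩
      {P | P.trace = d}) :=
    isCompact_setOf_posSemidef_one_sub_posSemidef.inter_right
      (isClosed_eq continuous_id.matrix_trace continuous_const)
  obtain ⟨P₀, hP₀, hP₀1, htr₀⟩ := exists_posSemidef_one_sub_posSemidef_trace_eq d.cast_nonneg hdD'
  obtain ⟨Pstar, ⟨⟨hPstar, hPstar1⟩, htrstar⟩, hmin⟩ :=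
    hK.exists_isMinOn_of_forall_exists_le ⟨P₀, ⟨hP₀, hP₀1⟩, htr₀⟩
      (S := {P | P.PosSemidef ∧ P.trace = (d : ℝ)})
      (f := fun P => ∑ x ∈ X, euclNorm (x - P *ᵥ x))
      (Continuous.continuousOn (by fun_prop)) fun P ⟨hP, htr⟩ => by
        obtain ⟨P', hP', hP'1, htr', hle⟩ := improve P hP htr
        exact ⟨P', ⟨⟨hP', hP'1⟩, htr'⟩, hle⟩
  exact ⟨improve, Pstar, hPstar, hPstar1, htrstar, fun P hP htr => hmin ⟨hP, htr⟩⟩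

/-- weak REAPER: fix `0 < d < D` and a finite set `X ⊆ ℝ^D`.
For every symmetric `P ≽ 0` with `tr P = d`, there is a symmetric `P'` with
`0 ≼ P' ≼ I`, `tr P' = d` and `Σ_x ‖x − P'x‖ ≤ Σ_x ‖x − Px‖`.  Consequently,
the problem of minimizing `Σ_x ‖x − Px‖` subject to `P ≽ 0`, `tr P = d` has an
optimal point satisfying `P ≼ I`. -/
theorem weak_reaper_has_bounded_solution
    (D d : ℕ) (hd0 : 0 < d) (hdD : d < D) (X : Finset (Fin D → ℝ)) :
    (∀ P : Matrix (Fin D) (Fin D) ℝ, P.PosSemidef → P.trace = (d : ℝ) →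
      ∃ P' : Matrix (Fin D) (Fin D) ℝ, P'.PosSemidef ∧ (1 - P').PosSemidef ∧
        P'.trace = (d : ℝ) ∧
        (∑ x ∈ X, euclNorm (x - P'.mulVec x)) ≤
          ∑ x ∈ X, euclNorm (x - P.mulVec x)) ∧
    ∃ Pstar : Matrix (Fin D) (Fin D) ℝ, Pstar.PosSemidef ∧
      (1 - Pstar).PosSemidef ∧ Pstar.trace = (d : ℝ) ∧
      ∀ P : Matrix (Fin D) (Fin D) ℝ, P.PosSemidef → P.trace = (d : ℝ) →
        (∑ x ∈ X, euclNorm (x - Pstar.mulVec x)) ≤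
          ∑ x ∈ X, euclNorm (x - P.mulVec x) :=
  weak_reaper_has_bounded_solution_general D d hdD X
end

section
/- Let λ_1 ≥ λ_2 ≥ ... ≥ λ_D ≥ 0 be reals with Σ_{j=1}^D λ_j = d where 0 ≤ d ≤ D. Let i⋆ be the smallest positive integer with Σ_{j=1}^{i⋆} λ_j ≤ i⋆. Define λ′_i = 1 for i < i⋆, λ′_{i⋆} = 1 − i⋆ + Σ_{j=1}^{i⋆} λ_j, and λ′_i = λ_i for i > i⋆. Then for every i: 0 ≤ λ′_i ≤ 1, Σ_{i=1}^D λ′_i = d, and (1 − λ′_i)² ≤ (1 − λ_i)². -/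
/-!
Write `S = λ_1 + ⋯ + λ_{i⋆}`. Minimality of `i⋆` gives `i⋆ - 1 + λ_{i⋆} ≤ S`, and `S ≤ i⋆`
together with monotonicity gives `λ_i ≤ 1` for `i ≥ i⋆`. Hence the pivot value
`λ'_{i⋆} = 1 - i⋆ + S` lies in `[λ_{i⋆}, 1]`, which yields both the bounds and
`(1 - λ'_{i⋆})² ≤ (1 - λ_{i⋆})²`; the first `i⋆` values of `λ'` add up to `S`, so the total is
unchanged.
-/

open Finset

namespace WaterFilling

variable {D : ℕ}

def prefixSum (l : Fin D → ℝ) (k : ℕ) : ℝ :=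
  ∑ j ∈ univ.filter fun j : Fin D => (j : ℕ) < k, l j

/-- `k` is the paper's `i⋆`; the pivot entry sits at the 0-based index `k - 1`. -/
def waterFill (l : Fin D → ℝ) (k : ℕ) (i : Fin D) : ℝ :=
  if (i : ℕ) + 1 < k then 1 else if (i : ℕ) + 1 = k then 1 - k + prefixSum l k else l i

variable (l : Fin D → ℝ)

@[simp]
lemma prefixSum_zero : prefixSum l 0 = 0 := by
  simp [prefixSum]

lemma prefixSum_succ {n : ℕ} (hn : n < D) : prefixSum l (n + 1) = prefixSum l n + l ⟨n, hn⟩ := by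
  have hsplit : (univ.filter fun j : Fin D => (j : ℕ) < n + 1)
      = insert ⟨n, hn⟩ (univ.filter fun j : Fin D => (j : ℕ) < n) := by
    ext j
    simp only [mem_filter, mem_univ, true_and, mem_insert, Fin.ext_iff]
    omega
  rw [prefixSum, hsplit, sum_insert (by simp), add_comm]
  rfl

lemma prefixSum_const {k : ℕ} (hk : k ≤ D) (c : ℝ) : prefixSum (fun _ : Fin D => c) k = k * c := by
  simp [prefixSum, Fin.card_filter_val_lt, min_eq_right hk]

lemma mul_le_prefixSum {l} (hl : Antitone l) {k : ℕ} (hk : k ≤ D) {i : Fin D}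
    (hi : k ≤ (i : ℕ) + 1) : k * l i ≤ prefixSum l k := by
  rw [← prefixSum_const hk]
  exact sum_le_sum fun j hj => hl (Fin.le_def.mpr (by simp at hj; omega))

lemma le_one_of_prefixSum_le {l} (hl : Antitone l) {k : ℕ} (hk : 0 < k) (hkD : k ≤ D)
    (hS : prefixSum l k ≤ k) {i : Fin D} (hi : k ≤ (i : ℕ) + 1) : l i ≤ 1 := by
  have hkl := mul_le_prefixSum hl hkD hi
  have hk' : (0 : ℝ) < k := by exact_mod_cast hk
  nlinarith

lemma sum_waterFill {n : ℕ} (hn : n < D) : ∑ i, waterFill l (n + 1) i = ∑ i, l i := by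
  have hhead : prefixSum (waterFill l (n + 1)) n = n := by
    rw [← mul_one (n : ℝ), ← prefixSum_const hn.le]
    exact sum_congr rfl fun i hi => by simp at hi; simp [waterFill, hi]
  have hpivot : prefixSum (waterFill l (n + 1)) (n + 1) = prefixSum l (n + 1) := by
    rw [prefixSum_succ _ hn, hhead, waterFill, if_neg (by simp), if_pos rfl]
    push_cast
    ring
  have htail : ∀ i ∈ univ.filter fun i : Fin D => ¬ (i : ℕ) < n + 1, waterFill l (n + 1) i = l i :=
    fun i hi => by
      simp only [mem_filter, mem_univ, true_and] at hi
      rw [waterFill, if_neg (by omega), if_neg (by omega)]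
  rw [← sum_filter_add_sum_filter_not univ (fun i : Fin D => (i : ℕ) < n + 1),
    ← sum_filter_add_sum_filter_not univ (fun i : Fin D => (i : ℕ) < n + 1) l]
  exact congrArg₂ _ hpivot (sum_congr rfl htail)

lemma waterFill_bounds_and_sq_le {n : ℕ} (hn : n < D) (hl0 : ∀ i, 0 ≤ l i)
    (hlow : n + l ⟨n, hn⟩ ≤ prefixSum l (n + 1)) (hupp : prefixSum l (n + 1) ≤ n + 1)
    (htail : ∀ i : Fin D, n ≤ (i : ℕ) → l i ≤ 1) (i : Fin D) :
    0 ≤ waterFill l (n + 1) i ∧ waterFill l (n + 1) i ≤ 1 ∧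
      (1 - waterFill l (n + 1) i) ^ 2 ≤ (1 - l i) ^ 2 := by
  rcases lt_trichotomy (i : ℕ) n with hi | hi | hi
  · rw [waterFill, if_pos (by omega)]
    exact ⟨zero_le_one, le_rfl, by simp [sq_nonneg]⟩
  · obtain rfl : i = ⟨n, hn⟩ := Fin.ext hi
    rw [waterFill, if_neg (by simp), if_pos (by simp)]
    push_cast
    have h0 := hl0 ⟨n, hn⟩
    have h1 := htail ⟨n, hn⟩ le_rfl
    refine ⟨by linarith, by linarith, pow_le_pow_left₀ (by linarith) (by linarith) 2⟩
  · rw [waterFill, if_neg (by omega), if_neg (by omega)]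
    exact ⟨hl0 i, htail i hi.le, le_rfl⟩

end WaterFilling

open WaterFilling in
theorem water_filling_eigenvalue_facts_general
    (D d : ℕ) (l : Fin D → ℝ)
    (hmono : ∀ i j : Fin D, i ≤ j → l j ≤ l i)
    (hnonneg : ∀ i, 0 ≤ l i)
    (hsum : (∑ j, l j) = (d : ℝ))
    (istar : ℕ) (h1 : 1 ≤ istar) (hD : istar ≤ D)
    (hle : (∑ j ∈ Finset.univ.filter fun j : Fin D => (j : ℕ) < istar, l j)
        ≤ (istar : ℝ))
    (hmin : ∀ k : ℕ, 1 ≤ k → k < istar →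
      ¬ ((∑ j ∈ Finset.univ.filter fun j : Fin D => (j : ℕ) < k, l j)
          ≤ (k : ℝ))) :
    (∀ i : Fin D,
        0 ≤ (if (i : ℕ) + 1 < istar then (1 : ℝ)
            else if (i : ℕ) + 1 = istar then
              1 - istar +
                ∑ j ∈ Finset.univ.filter fun j : Fin D => (j : ℕ) < istar, l j
            else l i) ∧
        (if (i : ℕ) + 1 < istar then (1 : ℝ)
            else if (i : ℕ) + 1 = istar then
              1 - istar +
                ∑ j ∈ Finset.univ.filter fun j : Fin D => (j : ℕ) < istar, l j
            else l i) ≤ 1) ∧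
    (∑ i : Fin D, (if (i : ℕ) + 1 < istar then (1 : ℝ)
        else if (i : ℕ) + 1 = istar then
          1 - istar +
            ∑ j ∈ Finset.univ.filter fun j : Fin D => (j : ℕ) < istar, l j
        else l i)) = (d : ℝ) ∧
    ∀ i : Fin D,
      (1 - (if (i : ℕ) + 1 < istar then (1 : ℝ)
          else if (i : ℕ) + 1 = istar then
            1 - istar +
              ∑ j ∈ Finset.univ.filter fun j : Fin D => (j : ℕ) < istar, l j
          else l i)) ^ 2 ≤ (1 - l i) ^ 2 := by
  obtain ⟨n, rfl⟩ : ∃ n, istar = n + 1 := ⟨istar - 1, by omega⟩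
  have hn : n < D := by omega
  have hprev : (n : ℝ) ≤ prefixSum l n := by
    rcases Nat.eq_zero_or_pos n with rfl | hpos
    · simp
    · exact le_of_not_ge (hmin n hpos (by omega))
  have hlow : n + l ⟨n, hn⟩ ≤ prefixSum l (n + 1) := by
    rw [prefixSum_succ l hn]
    linarith
  have htail : ∀ i : Fin D, n ≤ (i : ℕ) → l i ≤ 1 := fun i hi =>
    le_one_of_prefixSum_le hmono n.succ_pos hD hle (by omega)
  have hfacts := waterFill_bounds_and_sq_le l hn hnonneg hlow (by exact_mod_cast hle) htail
  exact ⟨fun i => ⟨(hfacts i).1, (hfacts i).2.1⟩, (sum_waterFill l hn).trans hsum,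
    fun i => (hfacts i).2.2⟩

/-- water-filling on eigenvalues.  Let
`λ_1 ≥ … ≥ λ_D ≥ 0` with `Σ λ_j = d`, `0 ≤ d ≤ D`.  Let `i⋆` be the smallest
positive integer with `Σ_{j ≤ i⋆} λ_j ≤ i⋆`.  Define `λ'_i = 1` for `i < i⋆`,
`λ'_{i⋆} = 1 − i⋆ + Σ_{j ≤ i⋆} λ_j`, and `λ'_i = λ_i` for `i > i⋆`.  Then
`0 ≤ λ'_i ≤ 1` for all `i`, `Σ λ'_i = d`, and `(1 − λ'_i)² ≤ (1 − λ_i)²`.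
(Indices `1, …, D` are represented by `i : Fin D` via `i.val + 1`.) -/
theorem water_filling_eigenvalue_facts
    (D d : ℕ) (hd : d ≤ D) (l : Fin D → ℝ)
    (hmono : ∀ i j : Fin D, i ≤ j → l j ≤ l i)
    (hnonneg : ∀ i, 0 ≤ l i)
    (hsum : (∑ j, l j) = (d : ℝ))
    (istar : ℕ) (h1 : 1 ≤ istar) (hD : istar ≤ D)
    (hle : (∑ j ∈ Finset.univ.filter fun j : Fin D => (j : ℕ) < istar, l j)
        ≤ (istar : ℝ))
    (hmin : ∀ k : ℕ, 1 ≤ k → k < istar →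
      ¬ ((∑ j ∈ Finset.univ.filter fun j : Fin D => (j : ℕ) < k, l j)
          ≤ (k : ℝ))) :
    (∀ i : Fin D,
        0 ≤ (if (i : ℕ) + 1 < istar then (1 : ℝ)
            else if (i : ℕ) + 1 = istar then
              1 - istar +
                ∑ j ∈ Finset.univ.filter fun j : Fin D => (j : ℕ) < istar, l j
            else l i) ∧
        (if (i : ℕ) + 1 < istar then (1 : ℝ)
            else if (i : ℕ) + 1 = istar then
              1 - istar +
                ∑ j ∈ Finset.univ.filter fun j : Fin D => (j : ℕ) < istar, l j
            else l i) ≤ 1) ∧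
    (∑ i : Fin D, (if (i : ℕ) + 1 < istar then (1 : ℝ)
        else if (i : ℕ) + 1 = istar then
          1 - istar +
            ∑ j ∈ Finset.univ.filter fun j : Fin D => (j : ℕ) < istar, l j
        else l i)) = (d : ℝ) ∧
    ∀ i : Fin D,
      (1 - (if (i : ℕ) + 1 < istar then (1 : ℝ)
          else if (i : ℕ) + 1 = istar then
            1 - istar +
              ∑ j ∈ Finset.univ.filter fun j : Fin D => (j : ℕ) < istar, l j
          else l i)) ^ 2 ≤ (1 - l i) ^ 2 :=
  water_filling_eigenvalue_facts_general D d l hmono hnonneg hsum istar h1 hD hle hmin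
end
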